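/- (Theorem 2, transfer-matrix form.) Fix μ ∈ [0,1] and let O and O' be arbitrary complex 5×5 matrices, indexed by m, m' ∈ {2, 1, 0, −1, −2}. Define the complex 9×9 matrices D_O := Σ_{m,m'} O_{m,m'} · A⁽ᵐ⁾ ⊗ A⁽ᵐ'⁾ and similarly D_{O'}. Then: (i) Tr[T(μ)^L] > 0 for all sufficiently large L; (ii) the single-site limits a := lim_{L→∞} Tr[D_O · T(μ)^{L−1}]/Tr[T(μ)^L] and a' := lim_{L→∞} Tr[D_{O'} · T(μ)^{L−1}]/Tr[T(μ)^L] exist; (iii) for every integer r ≥ 1 the two-point limit G(r) := lim_{L→∞} Tr[D_O · T(μ)^{r−1} · D_{O'} · T(μ)^{L−r−1}]/Tr[T(μ)^L] exists; and (iv) there is a constant C ≥ 0, depending only on O, O', and μ, such that |G(r) − a·a'| ≤ C·(|λ₅(μ)|/λ₁(μ))^r for every r ≥ 1. (These trace ratios are the expectations of single-site observables in the S=2 asymmetric VBS state via its matrix product representation, so the statement asserts the exponential decay of all truncated two-point correlation functions with rate |λ₅/λ₁|.) -/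

import Mathlib

open Matrix Kronecker Filter

/-- The matrices `A⁽²⁾, A⁽¹⁾, A⁽⁰⁾, A⁽⁻¹⁾, A⁽⁻²⁾` (indexed by `0, 1, 2, 3, 4`) of the
S=2 asymmetric VBS state, regarded as complex matrices (`κ = √(μ(1+μ²))`). -/
noncomputable def A (μ : ℝ) : Fin 5 → Matrix (Fin 3) (Fin 3) ℂ :=
  ![!![0, 0, 0; 0, 0, 0; -(μ : ℂ), 0, 0],
    (1 / 2 : ℂ) • !![0, 0, 0;
      (Real.sqrt (μ * (1 + μ ^ 2)) : ℂ), 0, 0;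
      0, -(Real.sqrt (μ * (1 + μ ^ 2)) : ℂ), 0],
    (1 / (Real.sqrt 6 : ℂ)) • !![-(μ : ℂ), 0, 0; 0, 1 + (μ : ℂ) ^ 2, 0; 0, 0, -(μ : ℂ)],
    (1 / 2 : ℂ) • !![0, -(Real.sqrt (μ * (1 + μ ^ 2)) : ℂ), 0;
      0, 0, (Real.sqrt (μ * (1 + μ ^ 2)) : ℂ);
      0, 0, 0],
    !![0, 0, -(μ : ℂ); 0, 0, 0; 0, 0, 0]]

/-- The transfer matrix `T(μ)` of the S=2 asymmetric VBS state. -/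
noncomputable def T (μ : ℝ) : Matrix (Fin 3 × Fin 3) (Fin 3 × Fin 3) ℂ :=
  ∑ m : Fin 5, A μ m ⊗ₖ A μ m

/-- The transfer-matrix insertion `D_O` corresponding to a single-site operator `O`. -/
noncomputable def D (μ : ℝ) (O : Matrix (Fin 5) (Fin 5) ℂ) :
    Matrix (Fin 3 × Fin 3) (Fin 3 × Fin 3) ℂ :=
  ∑ m : Fin 5, ∑ m' : Fin 5, O m m' • (A μ m ⊗ₖ A μ m')

/-- The eigenvalue `λ₁(μ)`. -/
noncomputable def lam1 (μ : ℝ) : ℝ :=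
  (1 + 9 * μ ^ 2 + μ ^ 4 +
    Real.sqrt (1 + 8 * μ ^ 2 + 63 * μ ^ 4 + 8 * μ ^ 6 + μ ^ 8)) / 12

/-- The eigenvalue `λ₅(μ)`. -/
noncomputable def lam5 (μ : ℝ) : ℝ := -5 * μ * (1 + μ ^ 2) / 12

/-!
Vectorising `3 × 3` matrices, `T μ` acts as `X ↦ ∑ₘ A⁽ᵐ⁾ X A⁽ᵐ⁾ᵀ`, and this map has nine explicit,
mutually orthogonal eigenmatrices. Hence `T μ ^ L = ∑ₖ λₖ ^ L Pₖ` with rank-one orthogonal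
projections `Pₖ`, and for `μ ∈ [0,1]` the eigenvalue `λ₁` strictly dominates: `|λₖ| ≤ |λ₅| < λ₁`
for every other `k`. Every trace ratio therefore converges to its `P₁`-component, `P₁` being rank
one makes the limiting two-point function factor as `a a'`, and the remaining terms of the truncated
function are `O((|λ₅| / λ₁) ^ r)`.
-/

namespace Matrix

open scoped ComplexOrder

variable {n : Type*} [Fintype n]

noncomputable def orthProj (v : n → ℂ) : Matrix n n ℂ :=
  (star v ⬝ᵥ v)⁻¹ • vecMulVec v (star v)

lemma orthProj_mul_orthProj (v w : n → ℂ) :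
    orthProj v * orthProj w =
      ((star v ⬝ᵥ v)⁻¹ * (star v ⬝ᵥ w) * (star w ⬝ᵥ w)⁻¹) • vecMulVec v (star w) := by
  simp only [orthProj, smul_mul_smul_comm, vecMulVec_mul_vecMulVec, vecMulVec_smul, smul_smul]
  ring_nf

lemma orthProj_mul_orthProj_of_dotProduct_eq_zero {v w : n → ℂ} (h : star v ⬝ᵥ w = 0) :
    orthProj v * orthProj w = 0 := by
  simp [orthProj_mul_orthProj, h]

lemma orthProj_mul_self {v : n → ℂ} (hv : v ≠ 0) : orthProj v * orthProj v = orthProj v := by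
  rw [orthProj_mul_orthProj, orthProj,
    mul_inv_cancel_right₀ (dotProduct_star_self_eq_zero.not.mpr hv)]

lemma trace_orthProj {v : n → ℂ} (hv : v ≠ 0) : (orthProj v).trace = 1 := by
  rw [orthProj, trace_smul, trace_vecMulVec, dotProduct_comm v, smul_eq_mul,
    inv_mul_cancel₀ (dotProduct_star_self_eq_zero.not.mpr hv)]

lemma conjTranspose_orthProj (v : n → ℂ) : (orthProj v)ᴴ = orthProj v := by
  rw [orthProj, conjTranspose_smul, conjTranspose_vecMulVec, star_star, star_inv₀,
    ← star_dotProduct]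

lemma orthProj_mul_mul_orthProj (v : n → ℂ) (Y : Matrix n n ℂ) :
    orthProj v * Y * orthProj v = (Y * orthProj v).trace • orthProj v := by
  simp only [orthProj, smul_mul_assoc, mul_smul_comm, smul_smul, trace_smul]
  rw [vecMulVec_mul, vecMulVec_mul_vecMulVec, mul_vecMulVec, trace_vecMulVec, vecMulVec_smul,
    smul_smul, ← dotProduct_mulVec, dotProduct_comm (Y *ᵥ v), smul_eq_mul]
  ring_nf

lemma mul_orthProj_of_mulVec_eq {T : Matrix n n ℂ} {v : n → ℂ} {c : ℂ} (h : T *ᵥ v = c • v) :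
    T * orthProj v = c • orthProj v := by
  rw [orthProj, mul_smul_comm, mul_vecMulVec, h, smul_vecMulVec, smul_comm]

lemma sum_orthProj_eq_one [DecidableEq n] {ι : Type*} [Fintype ι] {u : ι → n → ℂ}
    (hu : ∀ k, u k ≠ 0) (horth : Pairwise fun j k => star (u j) ⬝ᵥ u k = 0)
    (hcard : Fintype.card ι = Fintype.card n) : ∑ k, orthProj (u k) = 1 := by
  set S := ∑ k, orthProj (u k)
  have hidem : S * S = S := by
    simp only [S, Finset.sum_mul_sum]
    refine Finset.sum_congr rfl fun j _ => ?_
    rw [Finset.sum_eq_single j (fun k _ hkj => orthProj_mul_orthProj_of_dotProduct_eq_zero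
      (horth hkj.symm)) (by simp), orthProj_mul_self (hu j)]
  have hherm : (1 - S)ᴴ = 1 - S := by
    simp [S, conjTranspose_sum, conjTranspose_orthProj]
  have htrace : ((1 - S)ᴴ * (1 - S)).trace = 0 := by
    have : (1 - S) * (1 - S) = 1 - S := by noncomm_ring; rw [hidem]; abel
    rw [hherm, this, trace_sub, trace_one, trace_sum]
    simp [trace_orthProj (hu _), hcard]
  exact (sub_eq_zero.mp (trace_conjTranspose_mul_self_eq_zero_iff.mp htrace)).symm

end Matrix

open Filter Topology

structure IsOrthEigenbasis {ι n : Type*} [Fintype ι] [Fintype n] (T : Matrix n n ℂ)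
    (u : ι → n → ℂ) (e : ι → ℂ) : Prop where
  ne_zero : ∀ k, u k ≠ 0
  orthogonal : Pairwise fun j k => star (u j) ⬝ᵥ u k = 0
  card_eq : Fintype.card ι = Fintype.card n
  mulVec_eq : ∀ k, T *ᵥ u k = e k • u k

namespace IsOrthEigenbasis

variable {ι n : Type*} [Fintype ι] [Fintype n] [DecidableEq n]
  {T : Matrix n n ℂ} {u : ι → n → ℂ} {e : ι → ℂ}

lemma pow_eq_sum (hB : IsOrthEigenbasis T u e) (m : ℕ) :
    T ^ m = ∑ k, e k ^ m • orthProj (u k) := by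
  induction m with
  | zero => simp [sum_orthProj_eq_one hB.ne_zero hB.orthogonal hB.card_eq]
  | succ m ih =>
    rw [pow_succ', ih, Finset.mul_sum]
    refine Finset.sum_congr rfl fun k _ => ?_
    rw [mul_smul_comm, mul_orthProj_of_mulVec_eq (hB.mulVec_eq k), smul_smul, ← pow_succ]

lemma trace_pow (hB : IsOrthEigenbasis T u e) (m : ℕ) : (T ^ m).trace = ∑ k, e k ^ m := by
  simp [hB.pow_eq_sum, trace_sum, trace_orthProj (hB.ne_zero _)]

lemma trace_mul_pow_mul (hB : IsOrthEigenbasis T u e) (X Y : Matrix n n ℂ) (m : ℕ) :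
    (X * T ^ m * Y).trace = ∑ k, e k ^ m * (X * orthProj (u k) * Y).trace := by
  simp [hB.pow_eq_sum, Finset.mul_sum, Finset.sum_mul, trace_sum]

lemma isUnit (hB : IsOrthEigenbasis T u e) (he : ∀ k, e k ≠ 0) : IsUnit T := by
  have h : T * ∑ k, (e k)⁻¹ • orthProj (u k) = 1 := by
    simp_rw [Finset.mul_sum, mul_smul_comm, mul_orthProj_of_mulVec_eq (hB.mulVec_eq _), smul_smul,
      inv_mul_cancel₀ (he _), one_smul]
    exact sum_orthProj_eq_one hB.ne_zero hB.orthogonal hB.card_eq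
  exact isUnit_iff_exists.mpr ⟨_, h, mul_eq_one_comm.mp h⟩

variable {i : ι}

lemma tendsto_inv_pow_smul_pow (hB : IsOrthEigenbasis T u e) (hi : e i ≠ 0)
    (hdom : ∀ k ≠ i, ‖e k‖ < ‖e i‖) :
    Tendsto (fun m => (e i)⁻¹ ^ m • T ^ m) atTop (𝓝 (orthProj (u i))) := by
  classical
  have hterm : ∀ k, Tendsto (fun m => (e k / e i) ^ m • orthProj (u k)) atTop
      (𝓝 (if k = i then orthProj (u i) else 0)) := by
    intro k
    split_ifs with hk
    · subst hk
      simp [div_self hi]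
    · have hq : ‖e k / e i‖ < 1 := by
        rw [norm_div, div_lt_one (norm_pos_iff.mpr hi)]
        exact hdom k hk
      simpa using (tendsto_pow_atTop_nhds_zero_of_norm_lt_one hq).smul_const (orthProj (u k))
  convert tendsto_finsetSum Finset.univ fun k _ => hterm k using 1
  · ext1 m
    simp [hB.pow_eq_sum, Finset.smul_sum, smul_smul, div_eq_mul_inv, mul_pow, mul_comm]
  · simp

lemma tendsto_inv_pow_mul_trace_pow (hB : IsOrthEigenbasis T u e) (hi : e i ≠ 0)
    (hdom : ∀ k ≠ i, ‖e k‖ < ‖e i‖) :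
    Tendsto (fun m => (e i)⁻¹ ^ m * (T ^ m).trace) atTop (𝓝 1) := by
  simpa [Function.comp_def, trace_smul, trace_orthProj (hB.ne_zero i)] using
    (continuous_id.matrix_trace.tendsto _).comp (hB.tendsto_inv_pow_smul_pow hi hdom)

lemma tendsto_trace_mul_pow_div_trace_pow (hB : IsOrthEigenbasis T u e) (hi : e i ≠ 0)
    (hdom : ∀ k ≠ i, ‖e k‖ < ‖e i‖) (M : Matrix n n ℂ) (j : ℕ) :
    Tendsto (fun L => (M * T ^ (L - j)).trace / (T ^ L).trace) atTop
      (𝓝 ((M * orthProj (u i)).trace / e i ^ j)) := by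
  have hnum : Tendsto (fun L => (e i)⁻¹ ^ (L - j) * (M * T ^ (L - j)).trace) atTop
      (𝓝 (M * orthProj (u i)).trace) := by
    have hM : Continuous fun X : Matrix n n ℂ => (M * X).trace := by fun_prop
    simpa [Function.comp_def, mul_smul_comm, trace_smul] using
      (hM.tendsto _).comp ((hB.tendsto_inv_pow_smul_pow hi hdom).comp (tendsto_sub_atTop_nat j))
  have := (hnum.div (hB.tendsto_inv_pow_mul_trace_pow hi hdom) one_ne_zero).div_const (e i ^ j)
  rw [div_one] at this
  refine this.congr' ((eventually_ge_atTop j).mono fun L hL => ?_)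
  obtain ⟨m, rfl⟩ := Nat.exists_eq_add_of_le' hL
  simp only [Pi.div_apply, Nat.add_sub_cancel, inv_pow, pow_add (e i)]
  field_simp

/-- Factoring `D` through `T` makes the `k`-th subdominant term carry `e k ^ r` rather than
`e k ^ (r - 1)`, so the bound holds already at `r = 1`, even when some `e k` vanish. -/
lemma exists_norm_sub_le (hB : IsOrthEigenbasis T u e) (hi : e i ≠ 0) {ρ : ℝ}
    (hρ : ∀ k ≠ i, ‖e k‖ ≤ ρ) {D₀ D : Matrix n n ℂ} (hD : D = D₀ * T) (D' : Matrix n n ℂ) :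
    ∃ C : ℝ, 0 ≤ C ∧ ∀ r : ℕ, 1 ≤ r →
      ‖(D * T ^ (r - 1) * D' * orthProj (u i)).trace / e i ^ (r + 1) -
          (D * orthProj (u i)).trace / e i * ((D' * orthProj (u i)).trace / e i)‖ ≤
        C * (ρ / ‖e i‖) ^ r := by
  classical
  set P := orthProj (u i)
  set c : ι → ℂ := fun k => (D₀ * orthProj (u k) * (D' * P)).trace
  refine ⟨∑ k ∈ Finset.univ.erase i, ‖c k‖ / ‖e i‖, by positivity, fun r hr => ?_⟩
  have hG : (D * T ^ (r - 1) * D' * P).trace = ∑ k, e k ^ r * c k := by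
    rw [hD, mul_assoc D₀, ← pow_succ', Nat.sub_add_cancel hr, mul_assoc _ D',
      hB.trace_mul_pow_mul]
  have ha : (D * P).trace = e i * (D₀ * P).trace := by
    rw [hD, mul_assoc, mul_orthProj_of_mulVec_eq (hB.mulVec_eq i), mul_smul_comm, trace_smul,
      smul_eq_mul]
  have hci : c i = (D₀ * P).trace * (D' * P).trace := by
    show (D₀ * P * (D' * P)).trace = _
    rw [← mul_assoc, mul_assoc D₀ P D', mul_assoc D₀, orthProj_mul_mul_orthProj, mul_smul_comm,
      trace_smul, smul_eq_mul, mul_comm]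
  have hdiff : (D * T ^ (r - 1) * D' * P).trace / e i ^ (r + 1) -
      (D * P).trace / e i * ((D' * P).trace / e i) =
      ∑ k ∈ Finset.univ.erase i, e k ^ r * c k / e i ^ (r + 1) := by
    rw [hG, ha, ← Finset.add_sum_erase _ _ (Finset.mem_univ i), hci, ← Finset.sum_div]
    field_simp
    ring
  rw [hdiff, Finset.sum_mul]
  refine (norm_sum_le _ _).trans (Finset.sum_le_sum fun k hk => ?_)
  calc ‖e k ^ r * c k / e i ^ (r + 1)‖ = ‖e k‖ ^ r * (‖c k‖ / ‖e i‖ ^ (r + 1)) := by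
        rw [norm_div, norm_mul, norm_pow, norm_pow, mul_div_assoc]
    _ ≤ ρ ^ r * (‖c k‖ / ‖e i‖ ^ (r + 1)) := by
        gcongr
        exact hρ k (Finset.ne_of_mem_erase hk)
    _ = ‖c k‖ / ‖e i‖ * (ρ / ‖e i‖) ^ r := by
        rw [div_pow, pow_succ]
        ring

end IsOrthEigenbasis

lemma T_mulVec_vec (μ : ℝ) (X : Matrix (Fin 3) (Fin 3) ℂ) :
    T μ *ᵥ vec X = vec (∑ m, A μ m * X * (A μ m)ᵀ) := by
  simp only [T, sum_mulVec, kronecker_mulVec_vec, vec_sum]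

lemma sum_A_mul_mul_transpose {μ : ℝ} (hμ : 0 ≤ μ) (X : Matrix (Fin 3) (Fin 3) ℂ) :
    ∑ m, A μ m * X * (A μ m)ᵀ =
      let c : ℂ := μ * (1 + μ ^ 2)
      !![μ ^ 2 / 6 * X 0 0 + c / 4 * X 1 1 + μ ^ 2 * X 2 2, -(c / 6) * X 0 1 - c / 4 * X 1 2,
          μ ^ 2 / 6 * X 0 2;
        -(c / 6) * X 1 0 - c / 4 * X 2 1, c / 4 * X 0 0 + (1 + μ ^ 2) ^ 2 / 6 * X 1 1 + c / 4 * X 2 2,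
          -(c / 6) * X 1 2 - c / 4 * X 0 1;
        μ ^ 2 / 6 * X 2 0, -(c / 6) * X 2 1 - c / 4 * X 1 0,
          μ ^ 2 * X 0 0 + c / 4 * X 1 1 + μ ^ 2 / 6 * X 2 2] := by
  have hκ : ((√(μ * (1 + μ ^ 2)) : ℝ) : ℂ) ^ 2 = μ * (1 + μ ^ 2) := by
    rw [← Complex.ofReal_pow, Real.sq_sqrt (by positivity)]; push_cast; ring
  have h6 : ((√6 : ℝ) : ℂ) ^ 2 = 6 := by
    rw [← Complex.ofReal_pow, Real.sq_sqrt (by norm_num)]; push_cast; ring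
  have h6' : ((√6 : ℝ) : ℂ) ≠ 0 := by norm_num
  ext i j
  simp only [Matrix.sum_apply, mul_apply, transpose_apply, Fin.sum_univ_three, Fin.sum_univ_five]
  fin_cases i <;> fin_cases j <;> simp [A] <;> field_simp <;> simp only [hκ, h6] <;> ring

noncomputable def lam2 (μ : ℝ) : ℝ := (1 + 9 * μ ^ 2 + μ ^ 4) / 6 - lam1 μ

noncomputable def eigenvalue (μ : ℝ) : Fin 9 → ℝ :=
  ![lam1 μ, lam2 μ, -(5 * μ ^ 2 / 6), lam5 μ, μ * (1 + μ ^ 2) / 12, lam5 μ,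
    μ * (1 + μ ^ 2) / 12, μ ^ 2 / 6, μ ^ 2 / 6]

/-- The first two span the invariant plane of matrices `diag(p, q, p)`, on which the map
`X ↦ ∑ₘ A⁽ᵐ⁾ X A⁽ᵐ⁾ᵀ` is `(p, q) ↦ (7μ²/6 p + x q, 2x p + (1+μ²)²/6 q)`; the second is the
Frobenius-orthogonal complement of the first inside that plane. -/
noncomputable def eigenmatrix (μ : ℝ) : Fin 9 → Matrix (Fin 3) (Fin 3) ℝ :=
  let x := μ * (1 + μ ^ 2) / 4
  let y := lam1 μ - 7 * μ ^ 2 / 6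
  ![!![x, 0, 0; 0, y, 0; 0, 0, x], !![y, 0, 0; 0, -2 * x, 0; 0, 0, y],
    !![1, 0, 0; 0, 0, 0; 0, 0, -1], !![0, 1, 0; 0, 0, 1; 0, 0, 0], !![0, 1, 0; 0, 0, -1; 0, 0, 0],
    !![0, 0, 0; 1, 0, 0; 0, 1, 0], !![0, 0, 0; 1, 0, 0; 0, -1, 0], !![0, 0, 1; 0, 0, 0; 0, 0, 0],
    !![0, 0, 0; 0, 0, 0; 1, 0, 0]]

noncomputable def eigvec (μ : ℝ) (k : Fin 9) : Fin 3 × Fin 3 → ℂ :=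
  vec ((eigenmatrix μ k).map (↑))

lemma lam1_sq (μ : ℝ) :
    lam1 μ ^ 2 = (1 + 9 * μ ^ 2 + μ ^ 4) / 6 * lam1 μ - 5 * μ ^ 2 * (1 + μ ^ 2) ^ 2 / 72 := by
  have h := Real.sq_sqrt (show 0 ≤ 1 + 8 * μ ^ 2 + 63 * μ ^ 4 + 8 * μ ^ 6 + μ ^ 8 by positivity)
  unfold lam1
  linear_combination h / 144

lemma T_mulVec_eigvec {μ : ℝ} (hμ : 0 ≤ μ) (k : Fin 9) :
    T μ *ᵥ eigvec μ k = (eigenvalue μ k : ℂ) • eigvec μ k := by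
  have hq : ((lam1 μ : ℝ) : ℂ) ^ 2 = (1 + 9 * μ ^ 2 + μ ^ 4) / 6 * (lam1 μ : ℂ) -
      5 * μ ^ 2 * (1 + μ ^ 2) ^ 2 / 72 := by
    exact_mod_cast lam1_sq μ
  rw [eigvec, T_mulVec_vec, sum_A_mul_mul_transpose hμ, ← vec_smul]
  congr 1
  fin_cases k <;> ext i j <;> fin_cases i <;> fin_cases j <;>
    simp [eigenmatrix, eigenvalue, lam2, lam5] <;>
    -- only the diagonal entries of the first two eigenmatrices need the quadratic equation of `lam1`
    first | ring1 | linear_combination hq | linear_combination -hq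

lemma eigvec_orthogonal (μ : ℝ) : Pairwise fun j k => star (eigvec μ j) ⬝ᵥ eigvec μ k = 0 := by
  intro j k hjk
  rw [eigvec, eigvec, star_vec_dotProduct_vec]
  fin_cases j <;> fin_cases k <;>
    simp [Matrix.trace, mul_apply, Fin.sum_univ_three, eigenmatrix] at hjk ⊢ <;> ring

lemma one_add_four_mul_sq_le_sqrt (μ : ℝ) :
    1 + 4 * μ ^ 2 ≤ √(1 + 8 * μ ^ 2 + 63 * μ ^ 4 + 8 * μ ^ 6 + μ ^ 8) := by
  rw [Real.le_sqrt (by positivity) (by positivity)]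
  nlinarith [pow_nonneg (sq_nonneg μ) 3, pow_nonneg (sq_nonneg μ) 4, pow_nonneg (sq_nonneg μ) 2]

lemma seven_mul_sq_div_six_lt_lam1 (μ : ℝ) : 7 * μ ^ 2 / 6 < lam1 μ := by
  have := one_add_four_mul_sq_le_sqrt μ
  unfold lam1
  nlinarith [sq_nonneg (μ ^ 2 - 1 / 2)]

lemma lam1_pos (μ : ℝ) : 0 < lam1 μ :=
  lt_of_le_of_lt (by positivity) (seven_mul_sq_div_six_lt_lam1 μ)

lemma eigvec_ne_zero (μ : ℝ) (k : Fin 9) : eigvec μ k ≠ 0 := by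
  have hy := (sub_pos.mpr (seven_mul_sq_div_six_lt_lam1 μ)).ne'
  rw [eigvec, Ne, vec_eq_zero_iff]
  fin_cases k <;> simp [eigenmatrix, ← Matrix.ext_iff, Fin.forall_fin_succ, hy]

lemma isOrthEigenbasis_T {μ : ℝ} (hμ : 0 ≤ μ) :
    IsOrthEigenbasis (T μ) (eigvec μ) (fun k => (eigenvalue μ k : ℂ)) :=
  ⟨eigvec_ne_zero μ, eigvec_orthogonal μ, rfl, T_mulVec_eigvec hμ⟩

lemma abs_lam5 {μ : ℝ} (hμ : 0 ≤ μ) : |lam5 μ| = 5 * μ * (1 + μ ^ 2) / 12 := by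
  rw [lam5, abs_of_nonpos (by nlinarith [sq_nonneg μ])]
  ring

lemma abs_lam5_lt_lam1 {μ : ℝ} (hμ : μ ∈ Set.Icc (0 : ℝ) 1) : |lam5 μ| < lam1 μ := by
  obtain ⟨h0, h1⟩ := hμ
  have := one_add_four_mul_sq_le_sqrt μ
  rw [abs_lam5 h0, lam1]
  nlinarith [mul_nonneg (mul_nonneg h0 h0) (sub_nonneg.mpr h1), sq_nonneg (μ - 5 / 16)]

lemma lam1_mul_lam2 (μ : ℝ) : lam1 μ * lam2 μ = 5 * μ ^ 2 * (1 + μ ^ 2) ^ 2 / 72 := by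
  rw [lam2]
  linear_combination -lam1_sq μ

lemma lam2_nonneg (μ : ℝ) : 0 ≤ lam2 μ :=
  nonneg_of_mul_nonneg_right ((lam1_mul_lam2 μ).symm ▸ by positivity) (lam1_pos μ)

lemma lam2_le {μ : ℝ} (hμ : μ ∈ Set.Icc (0 : ℝ) 1) : lam2 μ ≤ 5 * μ * (1 + μ ^ 2) / 12 := by
  obtain ⟨h0, h1⟩ := hμ
  have : 1 + 9 * μ ^ 2 + μ ^ 4 - 5 * μ * (1 + μ ^ 2)
      ≤ √(1 + 8 * μ ^ 2 + 63 * μ ^ 4 + 8 * μ ^ 6 + μ ^ 8) := by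
    apply Real.le_sqrt_of_sq_le
    nlinarith [sq_nonneg (1 - μ), mul_nonneg h0 h0, mul_nonneg (mul_nonneg h0 h0) h0,
      sq_nonneg (μ ^ 2 - μ), mul_nonneg (mul_nonneg (mul_nonneg h0 h0) h0) h0,
      sq_nonneg (1 - μ ^ 2), mul_nonneg h0 (sub_nonneg.mpr h1)]
  rw [lam2, lam1]
  linarith

lemma norm_eigenvalue_le {μ : ℝ} (hμ : μ ∈ Set.Icc (0 : ℝ) 1) {k : Fin 9} (hk : k ≠ 0) :
    ‖(eigenvalue μ k : ℂ)‖ ≤ |lam5 μ| := by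
  rw [Complex.norm_real, Real.norm_eq_abs]
  obtain ⟨h0, h1⟩ := hμ
  have h2 := lam2_nonneg μ
  have h2' := lam2_le ⟨h0, h1⟩
  fin_cases k <;> simp [eigenvalue] at hk ⊢ <;> rw [abs_lam5 h0, abs_le] <;> constructor <;>
    nlinarith [sq_nonneg (1 - μ), mul_nonneg h0 (sq_nonneg μ), sq_nonneg μ]

lemma eigenvalue_ne_zero {μ : ℝ} (hμ : 0 < μ) (k : Fin 9) : eigenvalue μ k ≠ 0 := by
  have h2 : lam2 μ ≠ 0 := by
    refine right_ne_zero_of_mul (a := lam1 μ) ?_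
    rw [lam1_mul_lam2]
    positivity
  fin_cases k <;> simp [eigenvalue, lam5, (lam1_pos μ).ne', hμ.ne', h2] <;> positivity

lemma norm_eigenvalue_zero (μ : ℝ) : ‖(eigenvalue μ 0 : ℂ)‖ = lam1 μ := by
  simp [eigenvalue, abs_of_pos (lam1_pos μ)]

lemma norm_eigenvalue_lt {μ : ℝ} (hμ : μ ∈ Set.Icc (0 : ℝ) 1) {k : Fin 9} (hk : k ≠ 0) :
    ‖(eigenvalue μ k : ℂ)‖ < ‖(eigenvalue μ 0 : ℂ)‖ :=
  (norm_eigenvalue_le hμ hk).trans_lt ((norm_eigenvalue_zero μ).symm ▸ abs_lam5_lt_lam1 hμ)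

lemma D_zero (X : Matrix (Fin 5) (Fin 5) ℂ) : D 0 X = X 2 2 • T 0 := by
  obtain ⟨h0, h1, h3, h4⟩ : A 0 0 = 0 ∧ A 0 1 = 0 ∧ A 0 3 = 0 ∧ A 0 4 = 0 := by
    refine ⟨?_, ?_, ?_, ?_⟩ <;> ext i j <;> fin_cases i <;> fin_cases j <;> simp [A]
  simp only [D, T, Fin.sum_univ_five, h0, h1, h3, h4, zero_kronecker, kronecker_zero, smul_zero,
    add_zero, zero_add]

lemma exists_D_eq_mul_T {μ : ℝ} (hμ : 0 ≤ μ) (O : Matrix (Fin 5) (Fin 5) ℂ) :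
    ∃ D₀, D μ O = D₀ * T μ := by
  rcases hμ.eq_or_lt with rfl | hpos
  · exact ⟨O 2 2 • 1, by rw [D_zero, smul_one_mul]⟩
  · obtain ⟨S, hS⟩ := ((isOrthEigenbasis_T hpos.le).isUnit fun k => by
      exact_mod_cast eigenvalue_ne_zero hpos k).exists_left_inv
    exact ⟨D μ O * S, by rw [mul_assoc, hS, mul_one]⟩

lemma eventually_trace_pow_T_pos {μ : ℝ} (hμ : μ ∈ Set.Icc (0 : ℝ) 1) :
    ∃ L₀ : ℕ, ∀ L ≥ L₀, 0 < ((T μ ^ L).trace).re ∧ ((T μ ^ L).trace).im = 0 := by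
  have hB := isOrthEigenbasis_T hμ.1
  have hreal : ∀ L, (T μ ^ L).trace = ((∑ k, eigenvalue μ k ^ L : ℝ) : ℂ) := by
    intro L
    rw [hB.trace_pow]
    push_cast
    rfl
  have hlim := (Complex.continuous_re.tendsto 1).comp
    (hB.tendsto_inv_pow_mul_trace_pow (by exact_mod_cast (lam1_pos μ).ne')
      fun _ hk => norm_eigenvalue_lt hμ hk)
  obtain ⟨L₀, hL₀⟩ := eventually_atTop.mp (hlim.eventually (lt_mem_nhds one_pos))
  refine ⟨L₀, fun L hL => ?_⟩
  have hpos := hL₀ L hL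
  rw [Function.comp_apply, hreal, ← Complex.ofReal_inv, ← Complex.ofReal_pow,
    Complex.re_ofReal_mul] at hpos
  rw [hreal, Complex.ofReal_re, Complex.ofReal_im]
  exact ⟨pos_of_mul_pos_right hpos (pow_nonneg (inv_nonneg.mpr (lam1_pos μ).le) L), rfl⟩

/-- Theorem 2 in transfer-matrix form: for any single-site observables `O, O'` of the
S=2 asymmetric VBS state (`μ ∈ [0,1]`): (i) `Tr[T(μ)^L] > 0` for all large `L`;
(ii) the single-site expectations converge; (iii) the two-point expectations converge
for every `r ≥ 1`; (iv) the truncated two-point function decays exponentially with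
rate `|λ₅/λ₁|`. -/
theorem truncated_correlation_decay_S2 (μ : ℝ) (hμ : μ ∈ Set.Icc (0 : ℝ) 1)
    (O O' : Matrix (Fin 5) (Fin 5) ℂ) :
    (∃ L₀ : ℕ, ∀ L ≥ L₀, 0 < ((T μ ^ L).trace).re ∧ ((T μ ^ L).trace).im = 0) ∧
    ∃ a a' : ℂ,
      Tendsto (fun L : ℕ => (D μ O * T μ ^ (L - 1)).trace / (T μ ^ L).trace)
        atTop (nhds a) ∧
      Tendsto (fun L : ℕ => (D μ O' * T μ ^ (L - 1)).trace / (T μ ^ L).trace)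
        atTop (nhds a') ∧
      ∃ G : ℕ → ℂ,
        (∀ r : ℕ, 1 ≤ r →
          Tendsto (fun L : ℕ =>
              (D μ O * T μ ^ (r - 1) * D μ O' * T μ ^ (L - r - 1)).trace / (T μ ^ L).trace)
            atTop (nhds (G r))) ∧
        ∃ C : ℝ, 0 ≤ C ∧ ∀ r : ℕ, 1 ≤ r →
          ‖G r - a * a'‖ ≤ C * (|lam5 μ| / lam1 μ) ^ r := by
  have hB := isOrthEigenbasis_T hμ.1
  have hne : (eigenvalue μ 0 : ℂ) ≠ 0 := by exact_mod_cast (lam1_pos μ).ne'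
  have hlim := hB.tendsto_trace_mul_pow_div_trace_pow hne fun _ hk => norm_eigenvalue_lt hμ hk
  obtain ⟨D₀, hD₀⟩ := exists_D_eq_mul_T hμ.1 O
  obtain ⟨C, hC, hbound⟩ :=
    hB.exists_norm_sub_le hne (fun _ hk => norm_eigenvalue_le hμ hk) hD₀ (D μ O')
  refine ⟨eventually_trace_pow_T_pos hμ, _, _, by simpa only [pow_one] using hlim (D μ O) 1,
    by simpa only [pow_one] using hlim (D μ O') 1,
    fun r => (D μ O * T μ ^ (r - 1) * D μ O' * orthProj (eigvec μ 0)).trace /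
      (eigenvalue μ 0 : ℂ) ^ (r + 1),
    fun r _ => by simpa only [Nat.sub_sub] using hlim (D μ O * T μ ^ (r - 1) * D μ O') (r + 1),
    C, hC, fun r hr => ?_⟩
  simpa only [norm_eigenvalue_zero] using hbound r hr
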